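/- Let G be a finite connected simple graph with at least one edge. Then b(G) ≤ b(L(G)) + 1, where L(G) is the line graph of G. -/

import Mathlib

/-!
Burn the line graph optimally with edges `e₁, …, e_k`, and burn `G` with one chosen endpoint
of each `eᵢ`, followed by an arbitrary vertex. Since `G` has no isolated vertex, every vertex `v`
lies on some edge, which the line-graph burning reaches from some `eᵢ` within `k - i` steps;
projecting that walk to `G` costs at most one extra step, which the extra round pays for.
-/

open SimpleGraph

/-- `b` is a burning sequence of length `k` for `G`: the source `b i` is burned at time `i + 1`
(for `i : Fin k`), and every vertex must be within distance `k - (i + 1)` of some source `b i`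
(expressed via the existence of a short enough walk, so that unreachable vertices are never
considered burned). -/
def IsBurningSeq {V : Type*} (G : SimpleGraph V) {k : ℕ} (b : Fin k → V) : Prop :=
  ∀ v : V, ∃ i : Fin k, ∃ w : G.Walk v (b i), w.length + (i : ℕ) + 1 ≤ k

/-- The burning number of `G`: the least `k` admitting a burning sequence of length `k`. -/
noncomputable def burningNumber {V : Type*} (G : SimpleGraph V) : ℕ :=
  sInf {k : ℕ | ∃ b : Fin k → V, IsBurningSeq G b}

namespace SimpleGraph

variable {V : Type*} {G : SimpleGraph V}

lemma exists_walk_length_le_one_of_mem_edgeSet {e : Sym2 V} (he : e ∈ G.edgeSet) {v u : V}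
    (hv : v ∈ e) (hu : u ∈ e) : ∃ q : G.Walk v u, q.length ≤ 1 := by
  by_cases hvu : v = u
  · subst hvu
    exact ⟨.nil, zero_le_one⟩
  · rw [(Sym2.mem_and_mem_iff hvu).mp ⟨hv, hu⟩] at he
    exact ⟨(G.mem_edgeSet.mp he).toWalk, le_rfl⟩

lemma Walk.exists_walk_length_le_of_lineGraph {e f : G.edgeSet} (p : G.lineGraph.Walk e f)
    {v u : V} (hv : v ∈ (e : Sym2 V)) (hu : u ∈ (f : Sym2 V)) :
    ∃ q : G.Walk v u, q.length ≤ p.length + 1 := by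
  induction p generalizing v with
  | nil =>
    exact (exists_walk_length_le_one_of_mem_edgeSet (Subtype.prop _) hv hu).imp
      fun _ h ↦ by simpa
  | @cons e e' f hadj p ih =>
    obtain ⟨-, x, hxe, hxe'⟩ := lineGraph_adj_iff_exists.mp hadj
    obtain ⟨q₁, hq₁⟩ := exists_walk_length_le_one_of_mem_edgeSet e.2 hv hxe
    obtain ⟨q₂, hq₂⟩ := ih hxe' hu
    exact ⟨q₁.append q₂, by simp only [Walk.length_append, Walk.length_cons]; omega⟩

end SimpleGraph

section Burning

variable {V : Type*} {G : SimpleGraph V}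

lemma burningNumber_le_of_isBurningSeq {k : ℕ} {b : Fin k → V} (hb : IsBurningSeq G b) :
    burningNumber G ≤ k :=
  Nat.sInf_le ⟨b, hb⟩

lemma exists_isBurningSeq_burningNumber [Finite V] (G : SimpleGraph V) :
    ∃ b : Fin (burningNumber G) → V, IsBurningSeq G b := by
  obtain ⟨n, ⟨eqv⟩⟩ := Finite.exists_equiv_fin V
  -- listing every vertex burns each one from itself
  have henum : IsBurningSeq G eqv.symm := fun v ↦
    ⟨eqv v, Walk.nil.copy rfl (eqv.symm_apply_apply v).symm, by simp⟩
  exact Nat.sInf_mem (s := {k | ∃ b : Fin k → V, IsBurningSeq G b}) ⟨n, eqv.symm, henum⟩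

lemma IsBurningSeq.snoc_of_lineGraph {k : ℕ} {b : Fin k → G.edgeSet}
    (hb : IsBurningSeq G.lineGraph b) (hG : ∀ v, ∃ u, G.Adj v u) (v₀ : V) :
    IsBurningSeq G (Fin.snoc (fun i ↦ (b i : Sym2 V).out.1) v₀ : Fin (k + 1) → V) := by
  intro v
  obtain ⟨u, hvu⟩ := hG v
  obtain ⟨i, p, hp⟩ := hb ⟨s(v, u), hvu⟩
  obtain ⟨q, hq⟩ := p.exists_walk_length_le_of_lineGraph (Sym2.mem_mk_left v u)
    (Sym2.out_fst_mem (b i : Sym2 V))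
  refine ⟨i.castSucc, q.copy rfl (by simp), ?_⟩
  simp only [Walk.length_copy, Fin.val_castSucc]
  omega

end Burning

/-- For a connected graph `G` with at least one edge, `b(G) ≤ b(L(G)) + 1`. -/
theorem burningNumber_le_burningNumber_lineGraph_add_one {V : Type*} [Fintype V]
    (G : SimpleGraph V) (hconn : G.Connected) (hedge : G.edgeSet.Nonempty) :
    burningNumber G ≤ burningNumber G.lineGraph + 1 := by
  obtain ⟨a, c, hac⟩ := ne_bot_iff_exists_adj.mp (edgeSet_nonempty.mp hedge)
  have := hac.nontrivial
  have hG : ∀ v, ∃ u, G.Adj v u := hconn.preconnected.exists_adj_of_nontrivial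
  obtain ⟨b, hb⟩ := exists_isBurningSeq_burningNumber G.lineGraph
  exact burningNumber_le_of_isBurningSeq (hb.snoc_of_lineGraph hG a)
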